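/- (Lemma 7) Let visible system 1 be composite: let c₁, …, c_K be future-directed causal 2+1 vectors with sum v = (e, pT), composite mass m_v⁽¹⁾ = √(e² − |pT|²) and transverse momentum vT⁽¹⁾ = pT; and for a subset S ⊆ {1, …, K} with sum v' = (e', pT') set m_v' = √(e'² − |pT'|²). Then for every second visible system (m_v⁽²⁾, vT⁽²⁾), every pTmiss ∈ ℝ², and all hypothesized invisible masses m_i⁽¹⁾, m_i⁽²⁾ ≥ 0, mT2 computed with branch-1 visible data (m_v', pT') is less than or equal to mT2 computed with branch-1 visible data (m_v⁽¹⁾, vT⁽¹⁾); i.e. mT2 is never increased by omitting one or more of the visible constituents. -/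
import Mathlib


open scoped RealInnerProductSpace

/-- Transverse energy `e(m,p) = √(m² + |p|²)`. -/
noncomputable def transverseEnergy (m : ℝ) (p : EuclideanSpace ℝ (Fin 2)) : ℝ :=
  Real.sqrt (m ^ 2 + ‖p‖ ^ 2)

/-- Transverse mass `m_T(m_v, vT, m_i, qT)`. -/
noncomputable def transverseMass (mv : ℝ) (vT : EuclideanSpace ℝ (Fin 2))
    (mi : ℝ) (qT : EuclideanSpace ℝ (Fin 2)) : ℝ :=
  Real.sqrt (mv ^ 2 + mi ^ 2 +
    2 * (transverseEnergy mv vT * transverseEnergy mi qT - ⟪vT, qT⟫))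

/-- `mT2(v₁, v₂, pTmiss, m_i⁽¹⁾, m_i⁽²⁾)`: the infimum over all partitions
`qT⁽¹⁾ + qT⁽²⁾ = pTmiss` of the larger of the two transverse masses. -/
noncomputable def mT2 (mv1 : ℝ) (vT1 : EuclideanSpace ℝ (Fin 2))
    (mv2 : ℝ) (vT2 : EuclideanSpace ℝ (Fin 2))
    (ptmiss : EuclideanSpace ℝ (Fin 2)) (mi1 mi2 : ℝ) : ℝ :=
  sInf {r : ℝ | ∃ q1 q2 : EuclideanSpace ℝ (Fin 2), q1 + q2 = ptmiss ∧
    r = max (transverseMass mv1 vT1 mi1 q1) (transverseMass mv2 vT2 mi2 q2)}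

lemma te_of_mass (e : ℝ) (p : EuclideanSpace ℝ (Fin 2)) (h : ‖p‖ ≤ e) :
    transverseEnergy (Real.sqrt (e ^ 2 - ‖p‖ ^ 2)) p = e := by
  have h0 : (0:ℝ) ≤ e := le_trans (norm_nonneg p) h
  have hnn : 0 ≤ e ^ 2 - ‖p‖ ^ 2 := by nlinarith [norm_nonneg p]
  unfold transverseEnergy
  rw [Real.sq_sqrt hnn]
  have : e ^ 2 - ‖p‖ ^ 2 + ‖p‖ ^ 2 = e ^ 2 := by ring
  rw [this, Real.sqrt_sq h0]

lemma tm_mono (e1 er : ℝ) (p1 pr q : EuclideanSpace ℝ (Fin 2))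
    (h1 : ‖p1‖ ≤ e1) (hr : ‖pr‖ ≤ er) (mi : ℝ) :
    transverseMass (Real.sqrt (e1 ^ 2 - ‖p1‖ ^ 2)) p1 mi q ≤
      transverseMass (Real.sqrt ((e1 + er) ^ 2 - ‖p1 + pr‖ ^ 2)) (p1 + pr) mi q := by
  have h10 : (0:ℝ) ≤ e1 := le_trans (norm_nonneg p1) h1
  have hr0 : (0:ℝ) ≤ er := le_trans (norm_nonneg pr) hr
  have hfull : ‖p1 + pr‖ ≤ e1 + er :=
    le_trans (norm_add_le _ _) (add_le_add h1 hr)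
  have hnn1 : 0 ≤ e1 ^ 2 - ‖p1‖ ^ 2 := by nlinarith [norm_nonneg p1]
  have hnnf : 0 ≤ (e1 + er) ^ 2 - ‖p1 + pr‖ ^ 2 := by nlinarith [norm_nonneg (p1 + pr)]
  unfold transverseMass
  rw [te_of_mass e1 p1 h1, te_of_mass (e1 + er) (p1 + pr) hfull,
    Real.sq_sqrt hnn1, Real.sq_sqrt hnnf]
  apply Real.sqrt_le_sqrt
  have heq : ‖q‖ ≤ transverseEnergy mi q := by
    unfold transverseEnergy
    have h : ‖q‖ ^ 2 ≤ mi ^ 2 + ‖q‖ ^ 2 := by nlinarith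
    have h2 := Real.sqrt_le_sqrt h
    rwa [Real.sqrt_sq (norm_nonneg q)] at h2
  have hq0 : 0 ≤ transverseEnergy mi q := Real.sqrt_nonneg _
  have hnorm : ‖p1 + pr‖ ^ 2 = ‖p1‖ ^ 2 + 2 * ⟪p1, pr⟫ + ‖pr‖ ^ 2 := by
    rw [norm_add_sq_real]
  have hinner : ⟪p1 + pr, q⟫ = ⟪p1, q⟫ + ⟪pr, q⟫ := inner_add_left _ _ _
  have cs1 := real_inner_le_norm p1 pr
  have cs2 := real_inner_le_norm pr q
  rw [hnorm, hinner]
  nlinarith [norm_nonneg p1, norm_nonneg pr, norm_nonneg q,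
    mul_le_mul h1 hr (norm_nonneg pr) h10,
    mul_le_mul hr heq (norm_nonneg q) hr0]

lemma causal_sum (K : ℕ) (c : Fin K → ℝ × EuclideanSpace ℝ (Fin 2))
    (hc : ∀ k, ‖(c k).2‖ ≤ (c k).1) (T : Finset (Fin K)) :
    ‖(∑ k ∈ T, c k).2‖ ≤ (∑ k ∈ T, c k).1 := by
  rw [Prod.fst_sum, Prod.snd_sum]
  exact le_trans (norm_sum_le _ _) (Finset.sum_le_sum fun k _ => hc k)

/-- Lemma 7: `mT2` is never increased by omitting one or more of the
constituents of a composite visible system. -/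
theorem mT2_subset_le (K : ℕ) (c : Fin K → ℝ × EuclideanSpace ℝ (Fin 2))
    (hc : ∀ k, ‖(c k).2‖ ≤ (c k).1) (S : Finset (Fin K))
    (mv2 : ℝ) (hmv2 : 0 ≤ mv2) (vT2 ptmiss : EuclideanSpace ℝ (Fin 2))
    (mi1 mi2 : ℝ) (hmi1 : 0 ≤ mi1) (hmi2 : 0 ≤ mi2) :
    mT2 (Real.sqrt ((∑ k ∈ S, c k).1 ^ 2 - ‖(∑ k ∈ S, c k).2‖ ^ 2)) (∑ k ∈ S, c k).2
        mv2 vT2 ptmiss mi1 mi2 ≤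
      mT2 (Real.sqrt ((∑ k, c k).1 ^ 2 - ‖(∑ k, c k).2‖ ^ 2)) (∑ k, c k).2
        mv2 vT2 ptmiss mi1 mi2 := by
  set e1 := (∑ k ∈ S, c k).1 with he1
  set p1 := (∑ k ∈ S, c k).2 with hp1
  set er := (∑ k ∈ Sᶜ, c k).1 with her
  set pr := (∑ k ∈ Sᶜ, c k).2 with hpr
  have hsum : (∑ k ∈ S, c k) + (∑ k ∈ Sᶜ, c k) = ∑ k, c k :=
    Finset.sum_add_sum_compl S c
  have hfe : (∑ k, c k).1 = e1 + er := by rw [← hsum]; rfl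
  have hfp : (∑ k, c k).2 = p1 + pr := by rw [← hsum]; rfl
  have h1 : ‖p1‖ ≤ e1 := causal_sum K c hc S
  have hr : ‖pr‖ ≤ er := causal_sum K c hc Sᶜ
  rw [hfe, hfp]
  unfold mT2
  apply le_csInf
  · exact ⟨_, 0, ptmiss, zero_add ptmiss, rfl⟩
  · rintro r ⟨q1, q2, hq, rfl⟩
    have hBdd : BddBelow {r : ℝ | ∃ q1 q2 : EuclideanSpace ℝ (Fin 2), q1 + q2 = ptmiss ∧
        r = max (transverseMass (Real.sqrt (e1 ^ 2 - ‖p1‖ ^ 2)) p1 mi1 q1)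
          (transverseMass mv2 vT2 mi2 q2)} := by
      refine ⟨0, ?_⟩
      rintro r ⟨a, b, -, rfl⟩
      exact le_trans (Real.sqrt_nonneg _) (le_max_left _ _)
    refine le_trans (csInf_le hBdd ⟨q1, q2, hq, rfl⟩) ?_
    exact max_le_max (tm_mono e1 er p1 pr q1 h1 hr mi1) le_rfl
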